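/- Let G = ⟨a⟩ × ⟨b⟩ be free abelian of rank two and A a Schur ring over G such that ⟨a⟩ is an A-subgroup, {a^i, a^{-i}} is a basic set for all i, and the basic set containing b is D = {a^n b, b} for some nonzero integer n. Then for all integers i, j, the set {a^i b^j, a^{nj-i} b^j} is a basic set of A; consequently A equals the orbit Schur ring of the order-2 automorphism φ₂ with φ₂(a)=a^{-1}, φ₂(b)=a^n b. -/

import Mathlib

noncomputable def simpleQuantity (F : Type*) [Field F] {G : Type*} [Group G]
    (D : Finset G) : MonoidAlgebra F G :=
  ∑ g ∈ D, MonoidAlgebra.single g 1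

structure SchurRing (F G : Type*) [Field F] [Group G] where
  parts : Set (Finset G)
  parts_nonempty : ∀ D ∈ parts, D.Nonempty
  cover : ∀ g : G, ∃ D ∈ parts, g ∈ D
  eq_of_mem : ∀ D₁ ∈ parts, ∀ D₂ ∈ parts, ∀ g : G, g ∈ D₁ → g ∈ D₂ → D₁ = D₂
  one_mem : ({1} : Finset G) ∈ parts
  inv_mem : ∀ D ∈ parts, ∃ D' ∈ parts, ∀ g : G, g ∈ D' ↔ g⁻¹ ∈ D
  mul_mem : ∀ x ∈ Submodule.span F (simpleQuantity F '' parts),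
    ∀ y ∈ Submodule.span F (simpleQuantity F '' parts),
    x * y ∈ Submodule.span F (simpleQuantity F '' parts)

noncomputable def SchurRing.span {F G : Type*} [Field F] [Group G] (A : SchurRing F G) :
    Submodule F (MonoidAlgebra F G) :=
  Submodule.span F (simpleQuantity F '' A.parts)

def SchurRing.IsASet {F G : Type*} [Field F] [Group G] (A : SchurRing F G)
    (S : Set G) : Prop :=
  ∀ D ∈ A.parts, (∃ g ∈ D, g ∈ S) → ↑D ⊆ S

/-- The free abelian group of rank two, written multiplicatively. -/
abbrev Z2 := Multiplicative (ℤ × ℤ)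

/-- The first generator `a` of `Z × Z`. -/
def ga : Z2 := Multiplicative.ofAdd (1, 0)

/-- The second generator `b` of `Z × Z`. -/
def gb : Z2 := Multiplicative.ofAdd (0, 1)

/-
Write `a ^ i b ^ j` as `mk i j` and `D = {a ^ n b, b}`. Over a field of characteristic zero the
product set `S * T` of two basic sets is a union of basic sets, being the support of the product
of their simple quantities. Suppose the row-`J` pairs `{mk i J, mk (m - i) J}` are basic. The basic
set through `mk k (J + 1)` lies in the products of `D` with the pairs through `mk k J` and
`mk (k - n) J`; applying the same to any of its members `mk p (J + 1)` and comparing confines it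
to `{mk k (J + 1), mk (m + n - k) (J + 1)}`. Were that pair split into two singletons, multiplying each
by `D⁻¹` would force `2k = m` and `2k = m + 2n`, so `n = 0`. Induction from row `0` (the hypothesis
on `⟨a⟩`) gives all rows `J ≥ 0` with `m = nJ`, and inversion gives the rows `J < 0`.
-/

open MonoidAlgebra Pointwise

section
variable {F G : Type*} [Field F] [Group G] [DecidableEq G]

theorem coeff_simpleQuantity_mul_simpleQuantity (S T : Finset G) (g : G) :
    (simpleQuantity F S * simpleQuantity F T).coeff g =
      ({p ∈ S ×ˢ T | p.1 * p.2 = g}.card : F) := by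
  simp only [simpleQuantity, Finset.sum_mul_sum, single_mul_single, one_mul, coeff_sum,
    Finset.sum_apply', coeff_single, Finsupp.single_apply, ← Finset.sum_product',
    Finset.sum_boole]

theorem coeff_simpleQuantity_mul_simpleQuantity_ne_zero [CharZero F] {S T : Finset G} {g : G} :
    (simpleQuantity F S * simpleQuantity F T).coeff g ≠ 0 ↔ g ∈ S * T := by
  rw [coeff_simpleQuantity_mul_simpleQuantity, Nat.cast_ne_zero, Finset.card_ne_zero,
    Finset.filter_nonempty_iff, Finset.mem_mul]
  simp only [Finset.mem_product, Prod.exists, and_assoc, exists_and_left]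

end

namespace SchurRing

variable {F G : Type*} [Field F] [Group G] (A : SchurRing F G)

theorem simpleQuantity_mem_span {D : Finset G} (hD : D ∈ A.parts) :
    simpleQuantity F D ∈ A.span :=
  Submodule.subset_span ⟨D, hD, rfl⟩

theorem coeff_eq_of_mem_parts {x : MonoidAlgebra F G} (hx : x ∈ A.span) {D : Finset G}
    (hD : D ∈ A.parts) {g h : G} (hg : g ∈ D) (hh : h ∈ D) : x.coeff g = x.coeff h := by
  classical
  induction hx using Submodule.span_induction with
  | mem y hy =>
    obtain ⟨D', hD', rfl⟩ := hy
    have hgh : g ∈ D' ↔ h ∈ D' :=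
      ⟨fun hg' => A.eq_of_mem D hD D' hD' g hg hg' ▸ hh,
        fun hh' => A.eq_of_mem D hD D' hD' h hh hh' ▸ hg⟩
    simp [simpleQuantity, coeff_sum, Finsupp.single_apply, hgh]
  | zero => rfl
  | add x y _ _ hx hy => simp [hx, hy]
  | smul c x _ hx => simp [hx]

/-- In characteristic zero the support of `simpleQuantity F S * simpleQuantity F T` is exactly
`S * T`. -/
theorem isASet_mul [DecidableEq G] [CharZero F] {S T : Finset G} (hS : S ∈ A.parts)
    (hT : T ∈ A.parts) : A.IsASet ↑(S * T) := by
  rintro D hD ⟨g, hgD, hgST⟩ h hhD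
  have hx := A.mul_mem _ (A.simpleQuantity_mem_span hS) _ (A.simpleQuantity_mem_span hT)
  rw [Finset.mem_coe, ← coeff_simpleQuantity_mul_simpleQuantity_ne_zero (F := F)] at hgST ⊢
  rwa [← A.coeff_eq_of_mem_parts hx hD hgD hhD]

theorem inv_mem_parts [DecidableEq G] {D : Finset G} (hD : D ∈ A.parts) : D⁻¹ ∈ A.parts := by
  obtain ⟨D', hD', hmem⟩ := A.inv_mem D hD
  convert hD'
  ext g
  rw [hmem, Finset.mem_inv']

theorem parts_eq_of_forall_pair_mem [DecidableEq G] {φ : G → G}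
    (hφ : ∀ g, ({g, φ g} : Finset G) ∈ A.parts) :
    A.parts = {D | ∃ g, D = {g, φ g}} := by
  ext D
  refine ⟨fun hD => ?_, fun ⟨g, hg⟩ => hg ▸ hφ g⟩
  obtain ⟨g, hg⟩ := A.parts_nonempty D hD
  exact ⟨g, A.eq_of_mem D hD _ (hφ g) g hg (Finset.mem_insert_self _ _)⟩

end SchurRing

namespace Z2

def mk (i j : ℤ) : Z2 := Multiplicative.ofAdd (i, j)

@[simp] theorem mk_mul (i j k l : ℤ) : mk i j * mk k l = mk (i + k) (j + l) := rfl

@[simp] theorem mk_inv (i j : ℤ) : (mk i j)⁻¹ = mk (-i) (-j) := rfl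

@[simp] theorem mk_inj {i j k l : ℤ} : mk i j = mk k l ↔ i = k ∧ j = l := by
  simp [mk]

theorem exists_eq_mk (g : Z2) : ∃ i j, g = mk i j := ⟨g.toAdd.1, g.toAdd.2, rfl⟩

theorem ga_zpow_mul_gb_zpow (i j : ℤ) : ga ^ i * gb ^ j = mk i j := by
  simp [ga, gb, mk, ← ofAdd_zsmul, ← ofAdd_add]

theorem mk_mem_pair_mul_pair_iff {p q a b c d J K : ℤ} :
    mk p q ∈ ({mk a J, mk b J} * {mk c K, mk d K} : Finset Z2) ↔
      q = J + K ∧ (p = a + c ∨ p = a + d ∨ p = b + c ∨ p = b + d) := by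
  simp only [Finset.mem_mul, Finset.mem_insert, Finset.mem_singleton, exists_eq_or_imp,
    exists_eq_left, mk_mul, mk_inj]
  omega

theorem mk_mem_singleton_mul_pair_iff {p q a c d J K : ℤ} :
    mk p q ∈ ({mk a J} * {mk c K, mk d K} : Finset Z2) ↔
      q = J + K ∧ (p = a + c ∨ p = a + d) := by
  simp only [Finset.mem_mul, Finset.mem_insert, Finset.mem_singleton, exists_eq_or_imp,
    exists_eq_left, mk_mul, mk_inj]
  omega

end Z2

open Z2

def RowPairs {F : Type*} [Field F] (A : SchurRing F Z2) (m J : ℤ) : Prop :=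
  ∀ i, ({mk i J, mk (m - i) J} : Finset Z2) ∈ A.parts

namespace RowPairs

variable {F : Type*} [Field F] {A : SchurRing F Z2} {n m J : ℤ}

theorem neg (hrow : RowPairs A m J) : RowPairs A (-m) (-J) := by
  intro i
  convert A.inv_mem_parts (hrow (-i)) using 1
  simp only [Finset.inv_insert, Finset.inv_singleton, mk_inv, neg_neg]
  congr 3
  ring

variable [CharZero F]

theorem subset_succ (hD : ({mk n 1, mk 0 1} : Finset Z2) ∈ A.parts)
    (hrow : RowPairs A m J) {P : Finset Z2} (hP : P ∈ A.parts) {k : ℤ} (hk : mk k (J + 1) ∈ P) :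
    P ⊆ {mk k (J + 1), mk (m + n - k) (J + 1)} := by
  have hmul (i : ℤ) := A.isASet_mul (hrow i) hD
  intro h hh
  obtain ⟨p, q, rfl⟩ := exists_eq_mk h
  have hk₁ := hmul k P hP ⟨_, hk, mk_mem_pair_mul_pair_iff.2 ⟨rfl, by omega⟩⟩ hh
  have hk₂ := hmul (k - n) P hP ⟨_, hk, mk_mem_pair_mul_pair_iff.2 ⟨rfl, by omega⟩⟩ hh
  simp only [Finset.mem_coe, mk_mem_pair_mul_pair_iff] at hk₁ hk₂
  obtain ⟨rfl, hk₁⟩ := hk₁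
  have hp₁ := hmul p P hP ⟨_, hh, mk_mem_pair_mul_pair_iff.2 ⟨rfl, by omega⟩⟩ hk
  have hp₂ := hmul (p - n) P hP ⟨_, hh, mk_mem_pair_mul_pair_iff.2 ⟨rfl, by omega⟩⟩ hk
  simp only [Finset.mem_coe, mk_mem_pair_mul_pair_iff, Finset.mem_insert, Finset.mem_singleton,
    mk_inj, true_and, and_true, add_zero] at hk₂ hp₁ hp₂ ⊢
  omega

/-- `{a ^ k b ^ (J + 1)} * D⁻¹` meets the row-`J` pair of `a ^ k b ^ J`, so it contains all of it. -/
theorem two_mul_eq_of_singleton_mem_parts (hD : ({mk n 1, mk 0 1} : Finset Z2) ∈ A.parts)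
    (hrow : RowPairs A m J) {k : ℤ} (hk : ({mk k (J + 1)} : Finset Z2) ∈ A.parts) :
    2 * k = m + n ∨ 2 * k = m := by
  have hD' : ({mk (-n) (-1), mk 0 (-1)} : Finset Z2) ∈ A.parts := by
    simpa using A.inv_mem_parts hD
  have h := A.isASet_mul hk hD' _ (hrow k)
    ⟨_, Finset.mem_insert_self _ _, mk_mem_singleton_mul_pair_iff.2 ⟨by ring, by omega⟩⟩
  have hmem : mk (m - k) J ∈ ({mk (m - k) J} : Finset Z2) := Finset.mem_singleton_self _
  have := h (Finset.mem_insert_of_mem hmem)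
  rw [Finset.mem_coe, mk_mem_singleton_mul_pair_iff] at this
  omega

theorem succ (hn : n ≠ 0) (hD : ({mk n 1, mk 0 1} : Finset Z2) ∈ A.parts)
    (hrow : RowPairs A m J) : RowPairs A (m + n) (J + 1) := by
  intro i
  obtain ⟨P, hP, hiP⟩ := A.cover (mk i (J + 1))
  by_cases hi'P : mk (m + n - i) (J + 1) ∈ P
  · exact (Finset.Subset.antisymm (hrow.subset_succ hD hP hiP) (Finset.insert_subset hiP
      (Finset.singleton_subset_iff.2 hi'P))) ▸ hP
  have hsingle {R : Finset Z2} {k : ℤ} (hR : R ∈ A.parts) (hk : mk k (J + 1) ∈ R)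
      (hk' : mk (m + n - k) (J + 1) ∉ R) : ({mk k (J + 1)} : Finset Z2) ∈ A.parts := by
    have hRsub := (Finset.subset_insert_iff_of_notMem hk').1
      (Finset.pair_comm (mk k (J + 1)) _ ▸ hrow.subset_succ hD hR hk)
    exact Finset.Subset.antisymm hRsub (Finset.singleton_subset_iff.2 hk) ▸ hR
  have hne : 2 * i ≠ m + n := fun h => hi'P (by convert hiP using 2; omega)
  obtain ⟨Q, hQ, hi'Q⟩ := A.cover (mk (m + n - i) (J + 1))
  have hiQ : mk (m + n - (m + n - i)) (J + 1) ∉ Q := fun h =>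
    hi'P (A.eq_of_mem Q hQ P hP _ (sub_sub_cancel (m + n) i ▸ h) hiP ▸ hi'Q)
  have h₁ := hrow.two_mul_eq_of_singleton_mem_parts hD (hsingle hP hiP hi'P)
  have h₂ := hrow.two_mul_eq_of_singleton_mem_parts hD (hsingle hQ hi'Q hiQ)
  exact absurd (by omega) hn

end RowPairs

theorem rowPairs_zero {F : Type*} [Field F] {A : SchurRing F Z2}
    (hai : ∀ i : ℤ, ({ga ^ i, ga ^ (-i)} : Finset Z2) ∈ A.parts) : RowPairs A 0 0 := by
  intro i
  simpa [← ga_zpow_mul_gb_zpow] using hai i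

theorem rowPairs_mul {F : Type*} [Field F] [CharZero F] {A : SchurRing F Z2}
    (hai : ∀ i : ℤ, ({ga ^ i, ga ^ (-i)} : Finset Z2) ∈ A.parts) {n : ℤ} (hn : n ≠ 0)
    (hD : ({mk n 1, mk 0 1} : Finset Z2) ∈ A.parts) (J : ℤ) : RowPairs A (n * J) J := by
  have hnat (k : ℕ) : RowPairs A (n * k) k := by
    induction k with
    | zero => simpa using rowPairs_zero hai
    | succ k ih => simpa [mul_add] using ih.succ hn hD
  obtain ⟨k, rfl | rfl⟩ := Int.eq_nat_or_neg J
  · exact hnat k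
  · simpa using (hnat k).neg

/-- The automorphism `φ₂` of the paper: `a ↦ a⁻¹`, `b ↦ a ^ n b`. -/
def phi₂ (n : ℤ) : MulAut Z2 :=
  AddEquiv.toMultiplicative
    { toFun := fun p => (n * p.2 - p.1, p.2)
      invFun := fun p => (n * p.2 - p.1, p.2)
      left_inv := fun p => by simp
      right_inv := fun p => by simp
      map_add' := fun p q => by simp only [Prod.fst_add, Prod.snd_add, Prod.mk_add_mk]; ring_nf }

@[simp] theorem phi₂_mk (n i j : ℤ) : phi₂ n (mk i j) = mk (n * j - i) j := rfl

theorem orderOf_phi₂ (n : ℤ) : orderOf (phi₂ n) = 2 := by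
  have : Fact (Nat.Prime 2) := ⟨Nat.prime_two⟩
  refine orderOf_eq_prime (MulEquiv.ext fun g => ?_) fun h => ?_
  · obtain ⟨i, j, rfl⟩ := exists_eq_mk g
    rw [pow_two, MulAut.mul_apply, phi₂_mk, phi₂_mk]
    simp
  · simpa using congrArg (· (mk 1 0)) h

theorem orbit_schurRing_of_case_general {F : Type*} [Field F] [CharZero F]
    (A : SchurRing F Z2)
    (hai : ∀ i : ℤ, ({ga ^ i, ga ^ (-i)} : Finset Z2) ∈ A.parts)
    (n : ℤ) (hn : n ≠ 0) (hb : ({ga ^ n * gb, gb} : Finset Z2) ∈ A.parts) :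
    (∀ i j : ℤ, ({ga ^ i * gb ^ j, ga ^ (n * j - i) * gb ^ j} : Finset Z2) ∈ A.parts) ∧
    ∃ φ : MulAut Z2, φ ga = ga⁻¹ ∧ φ gb = ga ^ n * gb ∧ orderOf φ = 2 ∧
      A.parts = {D : Finset Z2 | ∃ g : Z2, D = {g, φ g}} := by
  have hD : ({mk n 1, mk 0 1} : Finset Z2) ∈ A.parts := by
    simpa [← ga_zpow_mul_gb_zpow] using hb
  have hpairs (g : Z2) : ({g, phi₂ n g} : Finset Z2) ∈ A.parts := by
    obtain ⟨i, j, rfl⟩ := exists_eq_mk g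
    simpa using rowPairs_mul hai hn hD j i
  refine ⟨fun i j => ?_, phi₂ n, ?_, ?_, orderOf_phi₂ n, A.parts_eq_of_forall_pair_mem hpairs⟩
  · simpa [ga_zpow_mul_gb_zpow] using hpairs (mk i j)
  · simpa [← ga_zpow_mul_gb_zpow] using phi₂_mk n 1 0
  · simpa [← ga_zpow_mul_gb_zpow] using phi₂_mk n 0 1

/-- Subcase 2.3: if `{a^i, a^{-i}}` are basic sets and the basic set containing
`b` is `{a^n b, b}`, then all `{a^i b^j, a^{nj-i} b^j}` are basic sets and `A`
is the orbit Schur ring of `φ₂`. -/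
theorem orbit_schurRing_of_case {F : Type*} [Field F] [CharZero F]
    (A : SchurRing F Z2) (ha : A.IsASet ↑(Subgroup.zpowers ga))
    (hai : ∀ i : ℤ, ({ga ^ i, ga ^ (-i)} : Finset Z2) ∈ A.parts)
    (n : ℤ) (hn : n ≠ 0) (hb : ({ga ^ n * gb, gb} : Finset Z2) ∈ A.parts) :
    (∀ i j : ℤ, ({ga ^ i * gb ^ j, ga ^ (n * j - i) * gb ^ j} : Finset Z2) ∈ A.parts) ∧
    ∃ φ : MulAut Z2, φ ga = ga⁻¹ ∧ φ gb = ga ^ n * gb ∧ orderOf φ = 2 ∧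
      A.parts = {D : Finset Z2 | ∃ g : Z2, D = {g, φ g}} :=
  orbit_schurRing_of_case_general A hai n hn hb
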